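/- For an integer n ≥ 2, define Z_n := (∏_{i=2}^{n} ζ(i))^{−1} · ∏_{p prime} (1 + p^{−2} + p^{−3} + ⋯ + p^{−n}). Then: (a) Z_2 = 1/ζ(4); (b) ∏_{p prime} (1 + p^{−2} + p^{−3} + p^{−4} + ⋯) = ζ(2)ζ(3)/ζ(6), where the inner sum is the full geometric tail Σ_{i=2}^{∞} p^{−i}; and (c) lim_{n→∞} Z_n = 1/(ζ(6) · ∏_{i=4}^{∞} ζ(i)). -/

import Mathlib

/-! With `x = 1/p`, the factorisations `1 + x² = (1 - x⁴) / (1 - x²)` and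
`1 + x² + x³ + ⋯ = 1 + x² / (1 - x) = (1 - x⁶) / ((1 - x²)(1 - x³))` turn the products over
primes in (a) and (b) into quotients of Euler products `ζ(k) = ∏_p (1 - p⁻ᵏ)⁻¹`. For (c), the
truncated products `∏_p (1 + p⁻² + ⋯ + p⁻ⁿ)` tend to the product in (b) by dominated convergence
(the inner sums are at most `2p⁻²`), and `∏_{i=2}^n ζ(i) → ζ(2)ζ(3) ∏_{i≥4} ζ(i)`, which
converges because `ζ(i+2) - 1 ≤ 2⁻ⁱ (ζ(2) - 1)`. -/

open Filter

/-- `ζ(i) = ∑_{j=1}^{∞} j⁻ⁱ`. -/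
noncomputable def zetaR (i : ℕ) : ℝ := ∑' j : ℕ+, ((j : ℝ) ^ i)⁻¹

/-- `Z_n = (∏_{i=2}^{n} ζ(i))⁻¹ · ∏_{p prime} (1 + p⁻² + p⁻³ + ⋯ + p⁻ⁿ)`. -/
noncomputable def Z (n : ℕ) : ℝ :=
  (∏ i ∈ Finset.Icc 2 n, zetaR i)⁻¹ *
    ∏' p : Nat.Primes, (1 + ∑ i ∈ Finset.Icc 2 n, (((p : ℕ) : ℝ) ^ i)⁻¹)

open Topology

@[to_additive]
theorem Finset.prod_Icc_eq_prod_range {M : Type*} [CommMonoid M] (f : ℕ → M) (k n : ℕ) :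
    ∏ i ∈ Finset.Icc k n, f i = ∏ i ∈ Finset.range (n + 1 - k), f (i + k) := by
  rw [← Finset.Ico_add_one_right_eq_Icc, Finset.prod_Ico_eq_prod_range]
  simp only [add_comm k]

@[to_additive]
theorem HasProd.tendsto_prod_Icc {M : Type*} [CommMonoid M] [TopologicalSpace M] {f : ℕ → M}
    {a : M} {k : ℕ} (h : HasProd (fun i ↦ f (i + k)) a) :
    Tendsto (fun n ↦ ∏ i ∈ Finset.Icc k n, f i) atTop (𝓝 a) := by
  simp only [Finset.prod_Icc_eq_prod_range]
  exact h.tendsto_prod_nat.comp (tendsto_sub_atTop_nat k |>.comp (tendsto_add_atTop_nat 1))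

theorem hasSum_pow_add_of_lt_one {x : ℝ} (h₀ : 0 ≤ x) (h₁ : x < 1) (k : ℕ) :
    HasSum (fun i ↦ x ^ (i + k)) (x ^ k / (1 - x)) := by
  simpa [pow_add, mul_comm, div_eq_mul_inv] using
    (hasSum_geometric_of_lt_one h₀ h₁).mul_left (x ^ k)

theorem one_add_sq_eq_div {K : Type*} [Field K] {x : K} (h : 1 - x ^ 2 ≠ 0) :
    1 + x ^ 2 = (1 - x ^ 2)⁻¹ / (1 - x ^ 4)⁻¹ := by
  rw [inv_div_inv, eq_div_iff h]
  ring

theorem one_add_sq_div_one_sub_eq {K : Type*} [Field K] {x : K} (h₂ : 1 - x ^ 2 ≠ 0)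
    (h₃ : 1 - x ^ 3 ≠ 0) :
    1 + x ^ 2 / (1 - x) = (1 - x ^ 2)⁻¹ * (1 - x ^ 3)⁻¹ / (1 - x ^ 6)⁻¹ := by
  have h₁ : 1 - x ≠ 0 := fun h ↦ h₂ (by linear_combination (1 + x) * h)
  field_simp
  ring

theorem zetaR_eq_tsum_nat {k : ℕ} (hk : k ≠ 0) : zetaR k = ∑' n : ℕ, ((n : ℝ) ^ k)⁻¹ :=
  tsum_pnat_eq_tsum_of_eq_zero (f := fun n : ℕ ↦ ((n : ℝ) ^ k)⁻¹) (by simp [hk])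

theorem zetaR_sub_one_eq_tsum {k : ℕ} (hk : 2 ≤ k) :
    zetaR k - 1 = ∑' n : ℕ, (((n : ℝ) + 2) ^ k)⁻¹ := by
  rw [zetaR_eq_tsum_nat (by omega),
    ← (Real.summable_nat_pow_inv.mpr hk).sum_add_tsum_nat_add 2]
  simp [Finset.sum_range_succ, zero_pow (by omega : k ≠ 0)]

theorem one_le_zetaR {k : ℕ} (hk : 2 ≤ k) : 1 ≤ zetaR k := by
  rw [← sub_nonneg, zetaR_sub_one_eq_tsum hk]
  positivity

theorem zetaR_pos {k : ℕ} (hk : 2 ≤ k) : 0 < zetaR k :=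
  one_pos.trans_le (one_le_zetaR hk)

theorem zetaR_add_two_sub_one_le (i : ℕ) : zetaR (i + 2) - 1 ≤ 2⁻¹ ^ i * (zetaR 2 - 1) := by
  have hsum {k : ℕ} (hk : 2 ≤ k) : Summable fun n : ℕ ↦ (((n : ℝ) + 2) ^ k)⁻¹ := by
    simpa using (summable_nat_add_iff 2).mpr (Real.summable_nat_pow_inv.mpr hk)
  rw [zetaR_sub_one_eq_tsum (by omega), zetaR_sub_one_eq_tsum le_rfl, ← tsum_mul_left]
  refine (hsum (by omega)).tsum_le_tsum (fun n ↦ ?_) ((hsum le_rfl).mul_left _)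
  have h2 : (2 : ℝ) ≤ n + 2 := by linarith [n.cast_nonneg (α := ℝ)]
  rw [inv_pow, ← mul_inv, pow_add]
  gcongr

theorem hasProd_zetaR_euler {k : ℕ} (hk : 2 ≤ k) :
    HasProd (fun p : Nat.Primes ↦ (1 - (((p : ℕ) : ℝ) ^ k)⁻¹)⁻¹) (zetaR k) := by
  let f : ℕ →*₀ ℝ := invMonoidWithZeroHom.comp
    ((powMonoidWithZeroHom (by omega : k ≠ 0)).comp (Nat.castRingHom ℝ).toMonoidWithZeroHom)
  have hf_apply (n : ℕ) : f n = ((n : ℝ) ^ k)⁻¹ := rfl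
  have hf : Summable (‖f ·‖) := by
    simpa only [hf_apply, norm_inv, norm_pow, Real.norm_natCast] using
      Real.summable_nat_pow_inv.mpr hk
  simpa only [hf_apply, zetaR_eq_tsum_nat (by omega : k ≠ 0)] using
    EulerProduct.eulerProduct_completely_multiplicative_hasProd hf

theorem summable_zetaR_add_sub_one {k : ℕ} (hk : 2 ≤ k) : Summable fun i ↦ zetaR (i + k) - 1 := by
  have h2 : Summable fun i ↦ zetaR (i + 2) - 1 :=
    .of_nonneg_of_le (fun i ↦ sub_nonneg.mpr (one_le_zetaR (by omega)))
      zetaR_add_two_sub_one_le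
      ((summable_geometric_of_lt_one (by norm_num) (by norm_num : (2 : ℝ)⁻¹ < 1)).mul_right _)
  obtain ⟨j, rfl⟩ := Nat.exists_eq_add_of_le' hk
  simpa [add_assoc] using (summable_nat_add_iff j).mpr h2

theorem tprod_zetaR_add_ne_zero {k : ℕ} (hk : 2 ≤ k) : ∏' i, zetaR (i + k) ≠ 0 := by
  simpa using tprod_one_add_ne_zero_of_summable
    (fun i ↦ by linarith [one_le_zetaR (k := i + k) (by omega)])
    (summable_zetaR_add_sub_one hk).norm

theorem hasProd_zetaR_add_two :
    HasProd (fun i ↦ zetaR (i + 2)) (zetaR 2 * zetaR 3 * ∏' i, zetaR (i + 4)) := by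
  have h : Multipliable fun i ↦ zetaR (i + 4) := by
    simpa only [add_sub_cancel] using Real.multipliable_one_add_of_summable
      (summable_zetaR_add_sub_one (k := 4) (by norm_num))
  have := h.hasProd.prod_range_mul (f := fun i ↦ zetaR (i + 2)) (k := 2)
  rwa [Finset.prod_range_succ, Finset.prod_range_one] at this

namespace Nat.Primes

theorem inv_le_half (p : Nat.Primes) : ((p : ℕ) : ℝ)⁻¹ ≤ 2⁻¹ :=
  inv_anti₀ two_pos (by exact_mod_cast p.prop.two_le)

theorem inv_lt_one (p : Nat.Primes) : ((p : ℕ) : ℝ)⁻¹ < 1 :=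
  p.inv_le_half.trans_lt (by norm_num)

theorem one_sub_inv_pow_ne_zero (p : Nat.Primes) {k : ℕ} (hk : k ≠ 0) :
    1 - ((p : ℕ) : ℝ)⁻¹ ^ k ≠ 0 :=
  sub_ne_zero.mpr (pow_lt_one₀ (by positivity) p.inv_lt_one hk).ne'

end Nat.Primes

theorem hasProd_one_add_inv_prime_sq :
    HasProd (fun p : Nat.Primes ↦ 1 + (((p : ℕ) : ℝ) ^ 2)⁻¹) (zetaR 2 / zetaR 4) :=
  ((hasProd_zetaR_euler le_rfl).div₀ (hasProd_zetaR_euler (k := 4) (by norm_num))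
    (zetaR_pos (by norm_num)).ne').congr_fun fun p ↦ by
      simpa only [inv_pow] using one_add_sq_eq_div (p.one_sub_inv_pow_ne_zero two_ne_zero)

theorem hasSum_inv_prime_pow_add_two (p : Nat.Primes) :
    HasSum (fun i : ℕ ↦ (((p : ℕ) : ℝ) ^ (i + 2))⁻¹)
      (((p : ℕ) : ℝ)⁻¹ ^ 2 / (1 - ((p : ℕ) : ℝ)⁻¹)) := by
  simpa only [inv_pow] using hasSum_pow_add_of_lt_one (by positivity) p.inv_lt_one 2

theorem hasProd_one_add_tsum_inv_prime_pow :
    HasProd (fun p : Nat.Primes ↦ 1 + ∑' i : ℕ, (((p : ℕ) : ℝ) ^ (i + 2))⁻¹)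
      (zetaR 2 * zetaR 3 / zetaR 6) :=
  (((hasProd_zetaR_euler le_rfl).mul (hasProd_zetaR_euler (k := 3) (by norm_num))).div₀
    (hasProd_zetaR_euler (k := 6) (by norm_num)) (zetaR_pos (by norm_num)).ne').congr_fun
    fun p ↦ by
      simpa only [(hasSum_inv_prime_pow_add_two p).tsum_eq, inv_pow] using
        one_add_sq_div_one_sub_eq (p.one_sub_inv_pow_ne_zero two_ne_zero)
          (p.one_sub_inv_pow_ne_zero three_ne_zero)

theorem sum_Icc_inv_prime_pow_le (p : Nat.Primes) (n : ℕ) :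
    ∑ i ∈ Finset.Icc 2 n, (((p : ℕ) : ℝ) ^ i)⁻¹ ≤ 2 * (((p : ℕ) : ℝ) ^ 2)⁻¹ := by
  set x := ((p : ℕ) : ℝ)⁻¹
  have hx : x ≤ 2⁻¹ := p.inv_le_half
  calc ∑ i ∈ Finset.Icc 2 n, (((p : ℕ) : ℝ) ^ i)⁻¹
      ≤ x ^ 2 / (1 - x) := by
        rw [Finset.sum_Icc_eq_sum_range]
        exact sum_le_hasSum _ (fun i _ ↦ by positivity) (hasSum_inv_prime_pow_add_two p)
    _ ≤ 2 * x ^ 2 := by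
        rw [div_le_iff₀ (by linarith)]
        nlinarith [sq_nonneg x]
    _ = 2 * (((p : ℕ) : ℝ) ^ 2)⁻¹ := by rw [inv_pow]

theorem tendsto_tprod_one_add_sum_Icc_inv_prime_pow :
    Tendsto (fun n ↦ ∏' p : Nat.Primes, (1 + ∑ i ∈ Finset.Icc 2 n, (((p : ℕ) : ℝ) ^ i)⁻¹))
      atTop (𝓝 (∏' p : Nat.Primes, (1 + ∑' i : ℕ, (((p : ℕ) : ℝ) ^ (i + 2))⁻¹))) := by
  have hsq : Summable fun p : Nat.Primes ↦ (((p : ℕ) : ℝ) ^ 2)⁻¹ :=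
    (Real.summable_nat_pow_inv.mpr one_lt_two).comp_injective Nat.Primes.coe_nat_injective
  refine tendsto_tprod_one_add_of_dominated_convergence (hsq.mul_left 2)
    (fun p ↦ HasSum.tendsto_sum_Icc (f := fun i ↦ (((p : ℕ) : ℝ) ^ i)⁻¹)
      (hasSum_inv_prime_pow_add_two p).summable.hasSum)
    (.of_forall fun n p ↦ ?_)
  rw [Real.norm_of_nonneg (by positivity)]
  exact sum_Icc_inv_prime_pow_le p n

theorem Z_two : Z 2 = (zetaR 4)⁻¹ := by
  simp only [Z, Finset.Icc_self, Finset.prod_singleton, Finset.sum_singleton,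
    hasProd_one_add_inv_prime_sq.tprod_eq]
  field_simp [(zetaR_pos le_rfl).ne']

theorem tendsto_Z : Tendsto Z atTop (𝓝 (zetaR 6 * ∏' i : ℕ, zetaR (i + 4))⁻¹) := by
  have hnum := tendsto_tprod_one_add_sum_Icc_inv_prime_pow
  rw [hasProd_one_add_tsum_inv_prime_pow.tprod_eq] at hnum
  have hζ₂ := (zetaR_pos le_rfl).ne'
  have hζ₃ := (zetaR_pos (k := 3) (by norm_num)).ne'
  have hden := (HasProd.tendsto_prod_Icc hasProd_zetaR_add_two).inv₀
    (mul_ne_zero (mul_ne_zero hζ₂ hζ₃) (tprod_zetaR_add_ne_zero (by norm_num)))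
  have hlim : (zetaR 6 * ∏' i : ℕ, zetaR (i + 4))⁻¹ =
      (zetaR 2 * zetaR 3 * ∏' i : ℕ, zetaR (i + 4))⁻¹ * (zetaR 2 * zetaR 3 / zetaR 6) := by
    field_simp
  rw [hlim]
  exact hden.mul hnum

/-- (a) `Z_2 = 1/ζ(4)`; (b) `∏_p (1 + p⁻² + p⁻³ + ⋯) = ζ(2)ζ(3)/ζ(6)`;
(c) `lim_{n→∞} Z_n = 1/(ζ(6)·∏_{i=4}^{∞} ζ(i))`. -/
theorem stmt15 :
    Z 2 = (zetaR 4)⁻¹ ∧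
    (∏' p : Nat.Primes, (1 + ∑' i : ℕ, (((p : ℕ) : ℝ) ^ (i + 2))⁻¹) =
      zetaR 2 * zetaR 3 / zetaR 6) ∧
    Tendsto Z atTop (nhds (zetaR 6 * ∏' i : ℕ, zetaR (i + 4))⁻¹) :=
  ⟨Z_two, hasProd_one_add_tsum_inv_prime_pow.tprod_eq, tendsto_Z⟩
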